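/- Let G be a Hausdorff topological group whose underlying space is hemicompact, has countable tightness, and is a Tanaka space. Then G is locally compact and metrizable. -/

import Mathlib

open Filter Topology Set

variable {G : Type*}

/-- A sequence `x` meshes with a filter `H` if every tail of the sequence meets every
member of `H`. -/
def SeqMeshes (x : ℕ → G) (H : Filter G) : Prop :=
  ∀ B ∈ H, ∀ k : ℕ, ∃ n ≥ k, x n ∈ B

/-- The adherence of a filter: the intersection of the closures of its members. -/
def adh [TopologicalSpace G] (H : Filter G) : Set G :=
  ⋂ A ∈ H, closure A

/-- A hemicompact space. -/
def Hemicompact (X : Type*) [TopologicalSpace X] : Prop :=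
  ∃ K : ℕ → Set X, (∀ n, IsCompact (K n)) ∧ ∀ C : Set X, IsCompact C → ∃ n, C ⊆ K n

/-- A Tanaka space. -/
def TanakaSpace (X : Type*) [TopologicalSpace X] : Prop :=
  ∀ H : Filter X, H.IsCountablyGenerated → (adh H).Nonempty →
    ∃ (x : ℕ → X) (l : X), Tendsto x atTop (𝓝 l) ∧ SeqMeshes x H

/-- A space has countable tightness if every point in the closure of a set `A` lies in
the closure of a countable subset of `A`. -/
def CountableTightness (X : Type*) [TopologicalSpace X] : Prop :=
  ∀ (A : Set X) (x : X), x ∈ closure A → ∃ B ⊆ A, B.Countable ∧ x ∈ closure B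

/-!
Local compactness: if a point `x` had no compact neighbourhood, the complements of the accumulated
compact sets `K 0 ∪ ⋯ ∪ K n` of the hemicompact family would generate a countably generated filter
adhering at `x`. A convergent sequence meshing with it has compact closure, which lies in some
`K 0 ∪ ⋯ ∪ K n`, and yet meets its complement.

Metrizability: it suffices that `{1}` is a Gδ. Every neighbourhood of `1` in a locally compact
group contains a compact Gδ subgroup, so transfinite recursion gives a decreasing chain `N o` of
compact subgroups, Gδ for `o < ω₁`, in which `N (o + 1)` misses some nontrivial element of `N o`.
Countable tightness rules out a chain decreasing strictly at every `γ < ω₁`: take an open set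
`S γ ∋ 1`, right invariant under `N (γ + 1)`, with `S γ * t γ` disjoint from `S γ` for some
`t γ ∈ N γ`, and choose `x β ∈ N β` outside every `S γ` with `β < γ` (compactness, and a greedy
choice on finite sets). A cluster point of `x` lies in the closure of countably many `x β`, all with
`β < γ` for some `γ < ω₁`, while `S γ` is a neighbourhood of it missing them. Hence some
`N γ` with `γ < ω₁` is trivial.
-/

open Pointwise Ordinal

section Tanaka

variable {X : Type*} [TopologicalSpace X]

theorem Hemicompact.weaklyLocallyCompactSpace (hhemi : Hemicompact X) (htanaka : TanakaSpace X) :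
    WeaklyLocallyCompactSpace X := by
  refine ⟨fun x => ?_⟩
  obtain ⟨K, hKc, hKabs⟩ := hhemi
  by_contra! hx
  have hanti : Antitone fun n => (accumulate K n)ᶜ := fun _ _ h =>
    compl_subset_compl.2 (monotone_accumulate h)
  have hbasis : (⨅ n, 𝓟 (accumulate K n)ᶜ).HasBasis (fun _ => True) fun n => (accumulate K n)ᶜ :=
    hasBasis_iInf_principal hanti.directed_ge
  have hadh : x ∈ adh (⨅ n, 𝓟 (accumulate K n)ᶜ) := by
    refine mem_iInter₂.2 fun A hA => ?_
    obtain ⟨n, -, hn⟩ := hbasis.mem_iff.1 hA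
    refine closure_mono hn ?_
    rw [closure_compl]
    exact fun h => hx _ (isCompact_accumulate hKc n) (mem_interior_iff_mem_nhds.1 h)
  obtain ⟨u, l, hu, hmesh⟩ := htanaka _ hbasis.isCountablyGenerated ⟨x, hadh⟩
  obtain ⟨n, hn⟩ := hKabs _ hu.isCompact_insert_range
  obtain ⟨m, -, hm⟩ := hmesh _ (hbasis.mem_of_mem (i := n) trivial) 0
  exact hm (subset_accumulate (hn (mem_insert_of_mem _ (mem_range_self m))))

theorem IsGδ.isCountablyGenerated_nhds [T2Space X] [LocallyCompactSpace X] {x : X}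
    (hx : IsGδ {x}) : (𝓝 x).IsCountablyGenerated := by
  obtain ⟨O, hOo, hxO⟩ := isGδ_iff_eq_iInter_nat.1 hx
  choose K hKx hKO hKc using fun n =>
    local_compact_nhds ((hOo n).mem_nhds (mem_iInter.1 (hxO.subset rfl) n))
  let L n := ⋂ i ∈ Iic n, K i
  have hLx : ∀ n, L n ∈ 𝓝 x := fun n => (biInter_mem (finite_Iic n)).2 fun i _ => hKx i
  have hLc : ∀ n, IsCompact (L n) := fun n =>
    (hKc 0).of_isClosed_subset (isClosed_biInter fun i _ => (hKc i).isClosed)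
      (biInter_subset_of_mem (Nat.zero_le n))
  have hLanti : Antitone L := fun m n h => biInter_subset_biInter_left (Iic_subset_Iic.2 h)
  have hLx' : ⋂ n, L n ⊆ {x} := by
    rw [hxO]
    exact iInter_mono fun n => (biInter_subset_of_mem self_mem_Iic).trans (hKO n)
  refine HasBasis.isCountablyGenerated (p := fun _ => True) (s := L) ⟨fun U => ⟨fun hU => ?_,
    fun ⟨n, _, hn⟩ => mem_of_superset (hLx n) hn⟩⟩
  obtain ⟨n, hn⟩ := exists_subset_nhds_of_isCompact hLanti.directed_ge hLc
    fun y hy => (hLx' hy : y = x) ▸ hU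
  exact ⟨n, trivial, hn⟩

end Tanaka

section Tower

variable {α : Type*} [CompleteLattice α]

noncomputable def infTower (a : α) (f : α → α) : Ordinal → α :=
  Ordinal.lt_wf.fix fun o T => a ⊓ ⨅ (o' : Ordinal) (h : o' < o), f (T o' h)

theorem infTower_eq (a : α) (f : α → α) (o : Ordinal) :
    infTower a f o = a ⊓ ⨅ (o' : Ordinal) (_ : o' < o), f (infTower a f o') :=
  Ordinal.lt_wf.fix_eq _ o

theorem infTower_le (a : α) (f : α → α) (o : Ordinal) : infTower a f o ≤ a :=
  (infTower_eq a f o).trans_le inf_le_left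

theorem infTower_antitone (a : α) (f : α → α) : Antitone (infTower a f) := fun o' o h => by
  rw [infTower_eq, infTower_eq]
  exact inf_le_inf_left a (iInf_mono fun o'' => iInf_mono' fun h' => ⟨h'.trans_le h, le_rfl⟩)

theorem infTower_succ_le (a : α) (f : α → α) (o : Ordinal) :
    infTower a f (Order.succ o) ≤ f (infTower a f o) :=
  (infTower_eq a f _).trans_le (inf_le_right.trans (iInf₂_le o (Order.lt_succ o)))

end Tower

section TopologicalGroup

variable [Group G]

theorem Subgroup.exists_mem_forall_notMem {ι : Type*} [LinearOrder ι]
    {P : Subgroup G} {t : ι → G} {S : ι → Set G} (ht : ∀ i, t i ∈ P)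
    (hS : ∀ i, ∀ y ∈ S i, y * t i ∉ S i) (hS' : ∀ i j, i < j → ∀ y, y * t j ∈ S i → y ∈ S i)
    (u : Finset ι) : ∃ x ∈ P, ∀ i ∈ u, x ∉ S i := by
  classical
  induction u using Finset.induction_on_max with
  | empty => exact ⟨1, P.one_mem, by simp⟩
  | insert a s has ih =>
    obtain ⟨x, hxP, hxs⟩ := ih
    simp only [Finset.mem_insert, forall_eq_or_imp]
    by_cases hxa : x ∈ S a
    · exact ⟨x * t a, P.mul_mem hxP (ht a), hS a x hxa,
        fun i hi hxi => hxs i hi (hS' i a (has i hi) x hxi)⟩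
    · exact ⟨x, hxP, hxa, hxs⟩

variable [TopologicalSpace G]

theorem Subgroup.isClosed_infTower {K : Subgroup G} {f : Subgroup G → Subgroup G}
    (hK : IsClosed (K : Set G)) (hf : ∀ H, IsClosed (f H : Set G)) (o : Ordinal) :
    IsClosed ((infTower K f o : Subgroup G) : Set G) := by
  rw [infTower_eq]
  simp only [Subgroup.coe_inf, Subgroup.coe_iInf]
  exact hK.inter (isClosed_iInter fun o' => isClosed_iInter fun _ => hf _)

theorem Subgroup.isGδ_infTower {K : Subgroup G} {f : Subgroup G → Subgroup G}
    (hK : IsGδ (K : Set G)) (hf : ∀ H, IsGδ (f H : Set G)) {o : Ordinal} (ho : o < ω₁) :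
    IsGδ ((infTower K f o : Subgroup G) : Set G) := by
  have : Countable (Iio o) := by
    rw [← Cardinal.mk_le_aleph0_iff, Cardinal.mk_Iio_ordinal, Cardinal.lift_le_aleph0]
    rwa [Cardinal.lt_omega_iff_card_lt, ← Cardinal.succ_aleph0, Order.lt_succ_iff] at ho
  rw [infTower_eq]
  simp only [Subgroup.coe_inf, Subgroup.coe_iInf]
  exact hK.inter (IsGδ.biInter (to_countable (Iio o)) fun o' _ => hf _)

variable [IsTopologicalGroup G]

theorem exists_isClosed_isGδ_subgroup_subset {U : Set G} (hU : U ∈ 𝓝 1) :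
    ∃ H : Subgroup G, IsClosed (H : Set G) ∧ IsGδ (H : Set G) ∧ (H : Set G) ⊆ U := by
  choose! W hW1 hWc hWinv hWmul using fun V (hV : V ∈ 𝓝 (1 : G)) =>
    exists_closed_nhds_one_inv_eq_mul_subset hV
  let V : ℕ → Set G := fun n => W^[n] U
  have hVsucc : ∀ n, V (n + 1) = W (V n) := fun n => Function.iterate_succ_apply' W n U
  have hV1 : ∀ n, V n ∈ 𝓝 1 := fun n => Nat.rec hU (fun n ih => hVsucc n ▸ hW1 _ ih) n
  have hVmul : ∀ n, V (n + 1) * V (n + 1) ⊆ V n := fun n => hVsucc n ▸ hWmul _ (hV1 n)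
  have hVinv : ∀ n, (V (n + 1))⁻¹ = V (n + 1) := fun n => hVsucc n ▸ hWinv _ (hV1 n)
  have hVc : ∀ n, IsClosed (V (n + 1)) := fun n => hVsucc n ▸ hWc _ (hV1 n)
  have hVsub : ∀ n, V (n + 1) ⊆ V n := fun n x hx =>
    hVmul n (by simpa using mul_mem_mul hx (mem_of_mem_nhds (hV1 (n + 1))))
  -- `x ∈ V (n + 2)` has the neighbourhood `x * interior (V (n + 2)) ⊆ V (n + 1)`
  have hVint : ∀ n, V (n + 2) ⊆ interior (V (n + 1)) := fun n x hx =>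
    interior_mono (hVmul (n + 1)) (subset_interior_mul_right
      (by simpa using mul_mem_mul hx (mem_interior_iff_mem_nhds.2 (hV1 (n + 2)))))
  refine ⟨{ carrier := ⋂ n, V (n + 1)
            one_mem' := mem_iInter.2 fun n => mem_of_mem_nhds (hV1 (n + 1))
            mul_mem' := fun ha hb => mem_iInter.2 fun n =>
              hVmul (n + 1) (mul_mem_mul (mem_iInter.1 ha (n + 1)) (mem_iInter.1 hb (n + 1)))
            inv_mem' := fun ha => mem_iInter.2 fun n =>
              hVinv n ▸ inv_mem_inv.2 (mem_iInter.1 ha n) },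
    isClosed_iInter hVc, ?_, (iInter_subset _ 0).trans (hVsub 0)⟩
  have : ⋂ n, V (n + 1) = ⋂ n, interior (V (n + 1)) :=
    (subset_iInter fun n => (iInter_subset _ (n + 1)).trans (hVint n)).antisymm
      (iInter_mono fun n => interior_subset)
  change IsGδ (⋂ n, V (n + 1))
  exact this ▸ IsGδ.iInter_of_isOpen fun n => isOpen_interior

theorem exists_isCompact_isGδ_subgroup_subset [WeaklyLocallyCompactSpace G] {U : Set G}
    (hU : U ∈ 𝓝 1) :
    ∃ H : Subgroup G, IsCompact (H : Set G) ∧ IsGδ (H : Set G) ∧ (H : Set G) ⊆ U := by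
  obtain ⟨K, hKc, hK⟩ := exists_compact_mem_nhds (1 : G)
  obtain ⟨H, hHc, hHg, hHU⟩ := exists_isClosed_isGδ_subgroup_subset (inter_mem hU hK)
  exact ⟨H, hKc.of_isClosed_subset hHc (hHU.trans inter_subset_right), hHg,
    hHU.trans inter_subset_left⟩

-- Stated for every `H`, so that it can be `choose`n into a total function.
theorem exists_isCompact_isGδ_subgroup_not_le [WeaklyLocallyCompactSpace G] [T1Space G]
    (H : Subgroup G) :
    ∃ K : Subgroup G, IsCompact (K : Set G) ∧ IsGδ (K : Set G) ∧ (H ≠ ⊥ → ¬H ≤ K) := by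
  by_cases hH : H = ⊥
  · obtain ⟨K, hKc, hKg, -⟩ := exists_isCompact_isGδ_subgroup_subset (G := G) univ_mem
    exact ⟨K, hKc, hKg, absurd hH⟩
  obtain ⟨⟨z, hzH⟩, hz⟩ := Subgroup.ne_bot_iff_exists_ne_one.1 hH
  obtain ⟨K, hKc, hKg, hKz⟩ := exists_isCompact_isGδ_subgroup_subset
    (isOpen_compl_singleton.mem_nhds (Ne.symm (Subtype.coe_ne_coe.2 hz)))
  exact ⟨K, hKc, hKg, fun _ hle => hKz (hle hzH) rfl⟩

theorem Subgroup.exists_isOpen_separating_of_notMem [T2Space G] {H : Subgroup G}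
    (hH : IsCompact (H : Set G)) {t : G} (ht : t ∉ H) :
    ∃ S : Set G, IsOpen S ∧ (1 : G) ∈ S ∧ (∀ y ∈ S, ∀ h ∈ H, y * h ∈ S) ∧ ∀ y ∈ S, y * t ∉ S := by
  have h1 : (1 : G) ∉ (H : Set G) * {t} * H := by
    rintro ⟨_, ⟨a, ha, s, hs, rfl⟩, b, hb, hab⟩
    rw [mem_singleton_iff] at hs
    subst hs
    have : a⁻¹ * (a * s * b) * b⁻¹ ∈ H := by
      rw [show a * s * b = 1 from hab, mul_one]
      exact H.mul_mem (H.inv_mem ha) (H.inv_mem hb)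
    exact ht (by simpa [mul_assoc] using this)
  obtain ⟨V, hV1, -, hVinv, hVV⟩ := exists_closed_nhds_one_inv_eq_mul_subset
    (((hH.mul isCompact_singleton).mul hH).isClosed.isOpen_compl.mem_nhds h1)
  refine ⟨interior V * H, isOpen_interior.mul_right,
    ⟨1, mem_interior_iff_mem_nhds.2 hV1, 1, H.one_mem, mul_one 1⟩, ?_, ?_⟩
  · rintro _ ⟨w, hw, h, hh, rfl⟩ h' hh'
    exact ⟨w, hw, h * h', H.mul_mem hh hh', (mul_assoc w h h').symm⟩
  · rintro _ ⟨w₁, hw₁, h₁, hh₁, rfl⟩ ⟨w₂, hw₂, h₂, hh₂, he⟩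
    refine hVV ⟨w₁⁻¹, hVinv ▸ inv_mem_inv.2 (interior_subset hw₁), w₂, interior_subset hw₂, rfl⟩
      ⟨_, ⟨h₁, hh₁, t, rfl, rfl⟩, h₂⁻¹, H.inv_mem hh₂, ?_⟩
    show h₁ * t * h₂⁻¹ = w₁⁻¹ * w₂
    rw [eq_mul_inv_of_mul_eq he]
    group

theorem CountableTightness.exists_succ_eq_of_antitone [T2Space G] (htight : CountableTightness G)
    {N : Ordinal → Subgroup G} (hN : Antitone N) (hNc : ∀ o, IsCompact (N o : Set G)) :
    ∃ γ < ω₁, N (Order.succ γ) = N γ := by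
  by_contra! hne
  have hsep : ∀ γ < ω₁, ∃ t ∈ N γ, ∃ S : Set G, IsOpen S ∧ (1 : G) ∈ S ∧
      (∀ y ∈ S, ∀ h ∈ N (Order.succ γ), y * h ∈ S) ∧ ∀ y ∈ S, y * t ∉ S := by
    intro γ hγ
    obtain ⟨t, htN, htN'⟩ := SetLike.not_le_iff_exists.1 fun hle =>
      hne γ hγ ((hN (Order.le_succ γ)).antisymm hle)
    exact ⟨t, htN, Subgroup.exists_isOpen_separating_of_notMem (hNc _) htN'⟩
  choose! t htN S hSo hS1 hSN hSt using hsep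
  have hx : ∀ β < ω₁, ∃ x ∈ N β, ∀ γ, β < γ → γ < ω₁ → x ∉ S γ := by
    intro β hβ
    obtain ⟨x, hxN, hxS⟩ := (hNc β).inter_iInter_nonempty
      (fun γ : {γ // β < γ ∧ γ < ω₁} => (S γ)ᶜ) (fun γ => (hSo γ γ.2.2).isClosed_compl) fun u => by
        obtain ⟨x, hx, hxu⟩ := Subgroup.exists_mem_forall_notMem
          (P := N β) (t := fun γ : {γ // β < γ ∧ γ < ω₁} => t γ) (S := fun γ => S γ)
          (fun γ => hN γ.2.1.le (htN γ γ.2.2)) (fun γ => hSt γ γ.2.2)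
          (fun i j hij y hy => by
            simpa using hSN i i.2.2 _ hy _ (inv_mem (hN (Order.succ_le_of_lt hij) (htN j j.2.2))))
          u
        exact ⟨x, hx, mem_iInter₂.2 hxu⟩
    exact ⟨x, hxN, fun γ hβγ hγ => mem_iInter.1 hxS ⟨γ, hβγ, hγ⟩⟩
  choose! x hxN hxS using hx
  have : Nonempty (Iio ω₁) := ⟨⟨0, omega_pos 1⟩⟩
  let F := map (fun i : Iio ω₁ => x i) atTop
  obtain ⟨z, -, hz⟩ := (hNc 0).exists_clusterPt (f := F)
    (le_principal_iff.2 (mem_map.2 (univ_mem' fun i => hN zero_le (hxN i i.2))))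
  have hzN : ∀ β < ω₁, z ∈ N β := fun β hβ => (hNc β).isClosed.closure_subset
    (hz.mem_closure_of_mem _ (mem_atTop_sets.2 ⟨⟨β, hβ⟩, fun i hi => hN hi (hxN i i.2)⟩))
  obtain ⟨B, hBx, hBc, hzB⟩ := htight _ z (hz.mem_closure_of_mem _ range_mem_map)
  choose! I hIx using fun b (hb : b ∈ B) => mem_range.1 (hBx hb)
  have := hBc.to_subtype
  set γ := Order.succ (⨆ b : B, (I b).1)
  have hγ : γ < ω₁ := (Cardinal.isSuccLimit_omega 1).succ_lt (iSup_lt_omega_one fun b => (I b).2)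
  obtain ⟨b, hbS, hbB⟩ := mem_closure_iff.1 hzB (S γ) (hSo γ hγ)
    (by simpa using hSN γ hγ 1 (hS1 γ hγ) z (hzN _ ((Cardinal.isSuccLimit_omega 1).succ_lt hγ)))
  have hbdd : BddAbove (range fun b : B => (I b).1) := ⟨ω₁, forall_mem_range.2 fun b => (I b).2.le⟩
  exact hxS (I b) (I b).2 γ (Order.lt_succ_of_le (le_ciSup hbdd ⟨b, hbB⟩)) hγ
    ((hIx b hbB).symm ▸ hbS)

theorem CountableTightness.isCountablyGenerated_nhds_one [T2Space G] [LocallyCompactSpace G]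
    (htight : CountableTightness G) : (𝓝 (1 : G)).IsCountablyGenerated := by
  obtain ⟨K, hKc, hKg, -⟩ := exists_isCompact_isGδ_subgroup_subset (G := G) univ_mem
  choose f hfc hfg hf using exists_isCompact_isGδ_subgroup_not_le (G := G)
  obtain ⟨γ, hγ, hγN⟩ := htight.exists_succ_eq_of_antitone (infTower_antitone K f)
    fun o : Ordinal.{0} => hKc.of_isClosed_subset
      (Subgroup.isClosed_infTower hKc.isClosed (fun H => (hfc H).isClosed) o) (infTower_le K f o)
  have hbot : infTower K f γ = ⊥ := by
    by_contra h
    exact hf _ h (hγN ▸ infTower_succ_le K f γ)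
  have := Subgroup.isGδ_infTower hKg hfg hγ
  rw [hbot, Subgroup.coe_bot] at this
  exact this.isCountablyGenerated_nhds

theorem IsTopologicalGroup.metrizableSpace_of_isCountablyGenerated_nhds_one [T0Space G]
    [(𝓝 (1 : G)).IsCountablyGenerated] : TopologicalSpace.MetrizableSpace G := by
  let := IsTopologicalGroup.rightUniformSpace G
  have : (uniformity G).IsCountablyGenerated := comap.isCountablyGenerated _ _
  exact UniformSpace.metrizableSpace

end TopologicalGroup

theorem stmt2 [Group G] [TopologicalSpace G] [IsTopologicalGroup G] [T2Space G]
    (hhemi : Hemicompact G) (htight : CountableTightness G) (htanaka : TanakaSpace G) :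
    LocallyCompactSpace G ∧ TopologicalSpace.MetrizableSpace G := by
  have := hhemi.weaklyLocallyCompactSpace htanaka
  have := htight.isCountablyGenerated_nhds_one
  exact ⟨inferInstance, IsTopologicalGroup.metrizableSpace_of_isCountablyGenerated_nhds_one⟩
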